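/- arXiv:2309.07363 — 2 statements merged into one kernel-verified Lean document; each statement's English description precedes it below -/
import Mathlib

section
/- Let X and Y be finite nonempty sets and c : X × Y → ℝ a cost function. Let p, p' ∈ Δ(X) and q, q' ∈ Δ(Y). For any c-optimal coupling γ of p and q, there exists a c-optimal coupling γ' of p' and q' such that ‖γ' − γ‖ ≤ min{min(|X|,|Y|), max(|X|,|Y|) − 1}·(‖p' − p‖ + ‖q' − q‖), where ‖γ' − γ‖ = (1/2)·Σ_{x,y} |γ'(x,y) − γ(x,y)|. -/
/-!
Take for `γ'` an optimal coupling of `p'` and `q'` that is closest to `γ` in total variation, and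
let `δ = γ' - γ`. Orient the complete bipartite graph on `X ⊕ Y` by the sign of `δ` (`x → y` when
`δ x y > 0`, `y → x` when `δ x y < 0`). This digraph is acyclic: a directed cycle carries a
circulation conformal to `δ`, and moving `γ` forward and `γ'` backward along it keeps both optimal
(their costs can only change in opposite directions), while bringing `γ'` strictly closer to `γ`.

On an acyclic bipartite digraph, twice the largest number of `X`-vertices preceding `v` on a path
ending at `v` (plus one when `v ∈ X`) is a potential that increases along every edge, with
oscillation at most `2 min(|X| - 1, |Y|)` on `X` and `2 min(|X|, |Y| - 1)` on `Y`. Summation by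
parts against this potential bounds `∑ |δ|` by these oscillations times the `ℓ¹` distances of the
marginals, because the marginal differences `p' - p` and `q' - q` have zero sum.
-/


open Finset

/-- `p` is a probability vector on the finite set `Z`. -/
def IsProbVec {Z : Type*} [Fintype Z] (p : Z → ℝ) : Prop :=
  (∀ z, 0 ≤ p z) ∧ ∑ z, p z = 1

/-- Total variation distance `‖p − q‖ = (1/2)·Σ_z |p z − q z|`. -/
noncomputable def tv {Z : Type*} [Fintype Z] (p q : Z → ℝ) : ℝ :=
  (∑ z, |p z - q z|) / 2

/-- Total variation distance between two functions on a product: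
`(1/2)·Σ_{x,y} |γ x y − γ' x y|`. -/
noncomputable def tv2 {X Y : Type*} [Fintype X] [Fintype Y]
    (γ γ' : X → Y → ℝ) : ℝ :=
  (∑ x, ∑ y, |γ x y - γ' x y|) / 2

/-- `γ` is a coupling of `p` and `q`. -/
def IsCoupling {X Y : Type*} [Fintype X] [Fintype Y]
    (γ : X → Y → ℝ) (p : X → ℝ) (q : Y → ℝ) : Prop :=
  (∀ x y, 0 ≤ γ x y) ∧ (∀ x, ∑ y, γ x y = p x) ∧ (∀ y, ∑ x, γ x y = q y)

/-- Total transport cost of `γ` under the cost function `c`. -/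
noncomputable def transportCost {X Y : Type*} [Fintype X] [Fintype Y]
    (c : X → Y → ℝ) (γ : X → Y → ℝ) : ℝ :=
  ∑ x, ∑ y, c x y * γ x y

/-- `γ` is a `c`-optimal coupling of `p` and `q`. -/
def IsOptimalCoupling {X Y : Type*} [Fintype X] [Fintype Y]
    (c : X → Y → ℝ) (γ : X → Y → ℝ) (p : X → ℝ) (q : Y → ℝ) : Prop :=
  IsCoupling γ p q ∧
    ∀ γ' : X → Y → ℝ, IsCoupling γ' p q → transportCost c γ ≤ transportCost c γ'

open Relation

theorem List.IsChain.nodup_of_acyclic {α : Type*} {R : α → α → Prop}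
    (hR : ∀ a, ¬ TransGen R a a) {l : List α} (h : l.IsChain R) : l.Nodup :=
  (h.imp fun _ _ => TransGen.single).pairwise.imp fun {a _} hab => by rintro rfl; exact hR a hab

theorem List.Nodup.countP_le_card {α : Type*} [Fintype α] {l : List α} (hl : l.Nodup)
    (p : α → Bool) : l.countP p ≤ #{a | p a} := by
  classical
  rw [List.countP_eq_length_filter, ← List.toFinset_card_of_nodup (hl.filter _)]
  exact card_le_card fun a => by simp

theorem card_filter_sum_type {X Y : Type*} [Fintype X] [Fintype Y] (p : X ⊕ Y → Prop)
    [DecidablePred p] : #{z | p z} = #{x | p (.inl x)} + #{y | p (.inr y)} := by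
  simp only [card_filter, Fintype.sum_sum_type]

section LeftDepth

open Function
open scoped Classical

variable {X Y : Type*} [Fintype X] [Fintype Y] (E : X ⊕ Y → X ⊕ Y → Prop)

/-- The largest number of vertices in `X` strictly before `v` on an `E`-path ending at `v`; such a
path is stored reversed, as a list `v :: l` forming a chain for `swap E`. -/
noncomputable def leftDepth (v : X ⊕ Y) : ℕ :=
  Nat.findGreatest (fun k => ∃ l, (v :: l).IsChain (swap E) ∧ l.countP Sum.isLeft = k)
    (Fintype.card X)

variable {E}

omit [Fintype Y] in
theorem exists_isChain_countP_eq_leftDepth (v : X ⊕ Y) :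
    ∃ l, (v :: l).IsChain (swap E) ∧ l.countP Sum.isLeft = leftDepth E v :=
  Nat.findGreatest_spec (P := fun k => ∃ l, (v :: l).IsChain (swap E) ∧ l.countP Sum.isLeft = k)
    (Nat.zero_le _) ⟨[], .singleton v, rfl⟩

theorem countP_isLeft_le_card {w : List (X ⊕ Y)} (hw : w.Nodup) :
    w.countP Sum.isLeft ≤ Fintype.card X := by
  refine (hw.countP_le_card _).trans_eq ?_
  simp [card_filter_sum_type]

omit [Fintype Y] in
/-- Each `X`-vertex on the path is followed by a vertex having an `E`-predecessor in `X`. -/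
theorem countP_isLeft_le_countP_exists_inl {v : X ⊕ Y} {l : List (X ⊕ Y)}
    (h : (v :: l).IsChain (swap E)) :
    l.countP Sum.isLeft ≤ (v :: l).countP fun z => decide (∃ x, E (.inl x) z) := by
  induction l generalizing v with
  | nil => simp
  | cons u l ih =>
    obtain ⟨huv, hl⟩ := List.isChain_cons_cons.1 h
    have := ih hl
    rw [List.countP_cons (a := v), List.countP_cons (a := u)]
    rcases u with x | y
    · rw [decide_eq_true (⟨x, huv⟩ : ∃ x, E (.inl x) v)]
      simp only [Sum.isLeft_inl, if_true]
      omega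
    · simp only [Sum.isLeft_inr, Bool.false_eq_true, if_false]
      omega

variable (hacyc : ∀ z, ¬ TransGen E z z)
include hacyc

omit [Fintype X] [Fintype Y] in
theorem nodup_of_isChain_swap {v : X ⊕ Y} {l : List (X ⊕ Y)} (h : (v :: l).IsChain (swap E)) :
    (v :: l).Nodup :=
  h.nodup_of_acyclic fun z hz => hacyc z (transGen_swap.mp hz)

theorem le_leftDepth {v : X ⊕ Y} {l : List (X ⊕ Y)} (h : (v :: l).IsChain (swap E)) :
    l.countP Sum.isLeft ≤ leftDepth E v := by
  refine Nat.le_findGreatest ?_ ⟨l, h, rfl⟩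
  have := countP_isLeft_le_card (nodup_of_isChain_swap hacyc h)
  rw [List.countP_cons] at this
  omega

theorem leftDepth_add_le {u v : X ⊕ Y} (huv : E u v) :
    leftDepth E u + (if u.isLeft then 1 else 0) ≤ leftDepth E v := by
  obtain ⟨l, hl, hcount⟩ := exists_isChain_countP_eq_leftDepth u
  have := le_leftDepth hacyc (l := u :: l) (List.isChain_cons_cons.2 ⟨huv, hl⟩)
  rwa [List.countP_cons, hcount] at this

theorem leftDepth_inl_lt_card (x : X) : leftDepth E (.inl x) < Fintype.card X := by
  obtain ⟨l, hl, hcount⟩ := exists_isChain_countP_eq_leftDepth (E := E) (.inl x)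
  have := countP_isLeft_le_card (nodup_of_isChain_swap hacyc hl)
  simp only [List.countP_cons, hcount, Sum.isLeft_inl, if_true] at this
  omega

theorem leftDepth_le_card_exists_inl (hE : ∀ x x', ¬ E (.inl x) (.inl x')) (v : X ⊕ Y) :
    leftDepth E v ≤ #{y | ∃ x, E (.inl x) (.inr y)} := by
  obtain ⟨l, hl, hcount⟩ := exists_isChain_countP_eq_leftDepth v
  rw [← hcount]
  refine (countP_isLeft_le_countP_exists_inl hl).trans
    (((nodup_of_isChain_swap hacyc hl).countP_le_card _).trans_eq ?_)
  simp [card_filter_sum_type, hE]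

theorem exists_potential (hE : ∀ x x', ¬ E (.inl x) (.inl x')) :
    ∃ (f : X → ℕ) (g : Y → ℕ), (∀ x y, E (.inl x) (.inr y) → f x + 1 ≤ g y) ∧
      (∀ x y, E (.inr y) (.inl x) → g y + 1 ≤ f x) ∧
      (∃ a, ∀ x, a ≤ f x ∧ f x ≤ a + 2 * min (Fintype.card X - 1) (Fintype.card Y)) ∧
      (∃ b, ∀ y, b ≤ g y ∧ g y ≤ b + 2 * min (Fintype.card X) (Fintype.card Y - 1)) := by
  have hcard : #{y | ∃ x, E (.inl x) (.inr y)} ≤ Fintype.card Y := card_filter_le _ _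
  have hdepth := leftDepth_le_card_exists_inl hacyc hE
  have hle (y : Y) : leftDepth E (.inr y) ≤ Fintype.card X := Nat.findGreatest_le _
  refine ⟨fun x => 2 * leftDepth E (.inl x) + 1, fun y => 2 * leftDepth E (.inr y),
    fun x y h => ?_, fun x y h => ?_, ⟨1, fun x => ?_⟩, ?_⟩ <;> dsimp only
  · have := leftDepth_add_le hacyc h
    simp only [Sum.isLeft_inl, if_true] at this
    omega
  · have := leftDepth_add_le hacyc h
    simp only [Sum.isLeft_inr, Bool.false_eq_true, if_false] at this
    omega
  · have := leftDepth_inl_lt_card hacyc x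
    have := hdepth (.inl x)
    omega
  -- Either every `y` has a predecessor in `X`, so that `g y ≥ 2`, or fewer than `card Y` do.
  · by_cases hall : #{y | ∃ x, E (.inl x) (.inr y)} = Fintype.card Y
    · refine ⟨2, fun y => ?_⟩
      obtain ⟨x, hx⟩ := card_filter_eq_iff.1 hall y (mem_univ y)
      have := leftDepth_add_le hacyc hx
      simp only [Sum.isLeft_inl, if_true] at this
      have := hdepth (.inr y)
      have := hle y
      omega
    · refine ⟨0, fun y => ?_⟩
      have := hdepth (.inr y)
      have := hle y
      omega

end LeftDepth

theorem add_mem_uIcc_zero_mul {a b C D d : ℝ} (hC : 0 ≤ C) (hD : 0 ≤ D)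
    (ha : a ∈ Set.uIcc 0 (C * d)) (hb : b ∈ Set.uIcc 0 (D * d)) :
    a + b ∈ Set.uIcc 0 ((C + D) * d) := by
  rcases le_total 0 d with hd | hd
  · rw [Set.uIcc_of_le (by positivity)] at *
    exact ⟨by linarith [ha.1, hb.1], by linarith [ha.2, hb.2]⟩
  · rw [Set.uIcc_of_ge (mul_nonpos_of_nonneg_of_nonpos hC hd),
      Set.uIcc_of_ge (mul_nonpos_of_nonneg_of_nonpos hD hd),
      Set.uIcc_of_ge (mul_nonpos_of_nonneg_of_nonpos (add_nonneg hC hD) hd)] at *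
    exact ⟨by linarith [ha.1, hb.1], by linarith [ha.2, hb.2]⟩

theorem abs_sub_eq_of_mem_uIcc {w d : ℝ} (h : w ∈ Set.uIcc 0 d) : |d - w| = |d| - |w| := by
  rcases Set.mem_uIcc.1 h with ⟨h₁, h₂⟩ | ⟨h₁, h₂⟩
  · rw [abs_of_nonneg (by linarith), abs_of_nonneg (by linarith), abs_of_nonneg h₁]
  · rw [abs_of_nonpos (by linarith), abs_of_nonpos (by linarith), abs_of_nonpos h₂]
    ring

theorem abs_sum_mul_le_of_sum_eq_zero {ι : Type*} [Fintype ι] {f r : ι → ℝ} {a b : ℝ}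
    (hr : ∑ i, r i = 0) (hf : ∀ i, f i ∈ Set.Icc a b) :
    |∑ i, f i * r i| ≤ (b - a) / 2 * ∑ i, |r i| := by
  have hshift : ∑ i, f i * r i = ∑ i, (f i - (a + b) / 2) * r i := by
    simp [sub_mul, sum_sub_distrib, ← mul_sum, hr]
  rw [hshift, mul_sum]
  refine (abs_sum_le_sum_abs _ _).trans (sum_le_sum fun i _ => ?_)
  rw [abs_mul]
  gcongr
  rw [abs_le]
  constructor <;> linarith [(hf i).1, (hf i).2]

section Flow

variable {X Y : Type*} [Fintype X] [Fintype Y]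

/-- The net amount leaving each vertex when `v x y` is sent from `x` to `y`. -/
def netOutflow : (X → Y → ℝ) →ₗ[ℝ] X ⊕ Y → ℝ where
  toFun v := Sum.elim (fun x => ∑ y, v x y) (fun y => -∑ x, v x y)
  map_add' v w := by ext (x | y) <;> simp [sum_add_distrib, add_comm]
  map_smul' a v := by ext (x | y) <;> simp [mul_sum]

@[simp]
theorem netOutflow_inl (v : X → Y → ℝ) (x : X) : netOutflow v (.inl x) = ∑ y, v x y := rfl

@[simp]
theorem netOutflow_inr (v : X → Y → ℝ) (y : Y) : netOutflow v (.inr y) = -∑ x, v x y := rfl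

theorem netOutflow_single [DecidableEq X] [DecidableEq Y] (x : X) (y : Y) (r : ℝ) :
    netOutflow (Matrix.single x y r) = Pi.single (.inl x) r - Pi.single (.inr y) r := by
  ext (x₁ | y₁) <;> simp [netOutflow, Matrix.single_apply, Pi.single_apply, ite_and, eq_comm]

def SignStep (δ : X → Y → ℝ) : X ⊕ Y → X ⊕ Y → Prop
  | .inl x, .inr y => 0 < δ x y
  | .inr y, .inl x => δ x y < 0
  | _, _ => False

def IsConformal (δ v : X → Y → ℝ) : Prop :=
  ∃ C > 0, ∀ x y, v x y ∈ Set.uIcc 0 (C * δ x y)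

omit [Fintype X] [Fintype Y] in
theorem IsConformal.add {δ v w : X → Y → ℝ} (hv : IsConformal δ v) (hw : IsConformal δ w) :
    IsConformal δ (v + w) := by
  obtain ⟨C, hC, hv⟩ := hv
  obtain ⟨D, hD, hw⟩ := hw
  exact ⟨C + D, add_pos hC hD, fun x y => add_mem_uIcc_zero_mul hC.le hD.le (hv x y) (hw x y)⟩

variable [DecidableEq X] [DecidableEq Y]

omit [Fintype X] [Fintype Y] in
theorem isConformal_single {δ : X → Y → ℝ} {x : X} {y : Y} {r : ℝ} (h : 0 < r * δ x y) :
    IsConformal δ (Matrix.single x y r) := by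
  have hδ : δ x y ≠ 0 := by rintro hδ; simp [hδ] at h
  refine ⟨r / δ x y, by simpa [div_pos_iff, mul_pos_iff] using h, fun x₁ y₁ => ?_⟩
  simp only [Matrix.single_apply]
  split_ifs with hxy
  · obtain ⟨rfl, rfl⟩ := hxy
    simp [hδ]
  · simp

theorem sum_sum_single_mul (δ : X → Y → ℝ) (x : X) (y : Y) (r : ℝ) :
    ∑ x₁, ∑ y₁, Matrix.single x y r x₁ y₁ * δ x₁ y₁ = r * δ x y := by
  simp [Matrix.single_apply, ite_and]

theorem exists_conformal_of_signStep {δ : X → Y → ℝ} {a b : X ⊕ Y} (h : SignStep δ a b) :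
    ∃ v, IsConformal δ v ∧ 0 < ∑ x, ∑ y, v x y * δ x y ∧
      netOutflow v = Pi.single a 1 - Pi.single b 1 := by
  rcases a with x | y <;> rcases b with x' | y' <;> simp only [SignStep] at h
  · refine ⟨Matrix.single x y' 1, isConformal_single (by simpa), ?_, netOutflow_single _ _ _⟩
    simpa [sum_sum_single_mul] using h
  · refine ⟨Matrix.single x' y (-1), isConformal_single (by simpa), ?_, ?_⟩
    · simpa [sum_sum_single_mul] using h
    · rw [netOutflow_single, Pi.single_neg, Pi.single_neg]
      abel

theorem exists_conformal_of_transGen {δ : X → Y → ℝ} {a b : X ⊕ Y}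
    (h : TransGen (SignStep δ) a b) :
    ∃ v, IsConformal δ v ∧ 0 < ∑ x, ∑ y, v x y * δ x y ∧
      netOutflow v = Pi.single a 1 - Pi.single b 1 := by
  induction h with
  | single hab => exact exists_conformal_of_signStep hab
  | tail _ hbc ih =>
    obtain ⟨v, hv, hpos, hflow⟩ := ih
    obtain ⟨w, hw, hpos', hflow'⟩ := exists_conformal_of_signStep hbc
    refine ⟨v + w, hv.add hw, ?_, ?_⟩
    · simpa [add_mul, sum_add_distrib] using add_pos hpos hpos'
    · rw [map_add, hflow, hflow']
      abel

end Flow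

section Coupling

variable {X Y : Type*} [Fintype X] [Fintype Y]

theorem transportCost_add (c γ w : X → Y → ℝ) :
    transportCost c (γ + w) = transportCost c γ + transportCost c w := by
  simp [transportCost, mul_add, sum_add_distrib]

theorem transportCost_neg (c w : X → Y → ℝ) : transportCost c (-w) = -transportCost c w := by
  simp [transportCost]

theorem tv_nonneg {Z : Type*} [Fintype Z] (p q : Z → ℝ) : 0 ≤ tv p q := by
  unfold tv
  positivity

theorem IsCoupling.add {γ w : X → Y → ℝ} {p : X → ℝ} {q : Y → ℝ} (hγ : IsCoupling γ p q)
    (hnonneg : ∀ x y, 0 ≤ γ x y + w x y) (hw : netOutflow w = 0) : IsCoupling (γ + w) p q := by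
  refine ⟨hnonneg, fun x => ?_, fun y => ?_⟩
  · have := congrFun hw (.inl x)
    simp only [netOutflow_inl, Pi.zero_apply] at this
    simp [sum_add_distrib, hγ.2.1 x, this]
  · have := congrFun hw (.inr y)
    simp only [netOutflow_inr, Pi.zero_apply, neg_eq_zero] at this
    simp [sum_add_distrib, hγ.2.2 y, this]

theorem IsProbVec.isCoupling_mul {p : X → ℝ} {q : Y → ℝ} (hp : IsProbVec p) (hq : IsProbVec q) :
    IsCoupling (fun x y => p x * q y) p q :=
  ⟨fun x y => mul_nonneg (hp.1 x) (hq.1 y), fun x => by rw [← mul_sum, hq.2, mul_one],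
    fun y => by rw [← sum_mul, hp.2, one_mul]⟩

theorem isCompact_setOf_isCoupling (p : X → ℝ) (q : Y → ℝ) :
    IsCompact {γ : X → Y → ℝ | IsCoupling γ p q} := by
  have hclosed : IsClosed {γ : X → Y → ℝ | IsCoupling γ p q} := by
    simp only [IsCoupling, Set.ofPred_and, Set.ofPred_forall]
    exact (isClosed_iInter fun x => isClosed_iInter fun y =>
      isClosed_le continuous_const (by fun_prop)).inter
        ((isClosed_iInter fun x => isClosed_eq (by fun_prop) continuous_const).inter
        (isClosed_iInter fun y => isClosed_eq (by fun_prop) continuous_const))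
  refine (isCompact_univ_pi fun x => isCompact_univ_pi fun _ => isCompact_Icc (a := 0) (b := p x))
    |>.of_isClosed_subset hclosed fun γ hγ => ?_
  simp only [Set.mem_pi, Set.mem_univ, true_implies, Set.mem_Icc]
  exact fun x y => ⟨hγ.1 x y, hγ.2.1 x ▸ single_le_sum (fun y _ => hγ.1 x y) (mem_univ y)⟩

theorem exists_isOptimalCoupling_forall_le (c : X → Y → ℝ) {p : X → ℝ} {q : Y → ℝ}
    (hne : ∃ γ, IsCoupling γ p q) {f : (X → Y → ℝ) → ℝ} (hf : Continuous f) :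
    ∃ γ, IsOptimalCoupling c γ p q ∧ ∀ η, IsOptimalCoupling c η p q → f γ ≤ f η := by
  have hC := isCompact_setOf_isCoupling p q
  have hcost : Continuous (transportCost c) := by unfold transportCost; fun_prop
  obtain ⟨γ₀, hγ₀, hmin₀⟩ := hC.exists_isMinOn hne hcost.continuousOn
  have hS : {η | IsOptimalCoupling c η p q} =
      {η | IsCoupling η p q} ∩ transportCost c ⁻¹' Set.Iic (transportCost c γ₀) := by
    ext η
    exact ⟨fun h => ⟨h.1, h.2 γ₀ hγ₀⟩, fun h => ⟨h.1, fun η' hη' => h.2.trans (hmin₀ hη')⟩⟩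
  have hScompact : IsCompact {η | IsOptimalCoupling c η p q} :=
    hS ▸ hC.inter_right (isClosed_Iic.preimage hcost)
  obtain ⟨γ, hγ, hmin⟩ :=
    hScompact.exists_isMinOn ⟨γ₀, hγ₀, fun η hη => hmin₀ hη⟩ hf.continuousOn
  exact ⟨γ, hγ, fun η hη => hmin hη⟩

variable {c γ γ' : X → Y → ℝ} {p p' : X → ℝ} {q q' : Y → ℝ}

/-- Neither `γ + w` nor `γ' - w` is cheaper than its original, and their cost changes are
opposite, so `γ' - w` is still optimal, and it is closer to `γ`. -/
theorem eq_zero_of_forall_tv2_le (hγ : IsOptimalCoupling c γ p q)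
    (hγ' : IsOptimalCoupling c γ' p' q')
    (hmin : ∀ η, IsOptimalCoupling c η p' q' → tv2 γ' γ ≤ tv2 η γ) {w : X → Y → ℝ}
    (hw : ∀ x y, w x y ∈ Set.uIcc 0 (γ' x y - γ x y)) (hflow : netOutflow w = 0) : w = 0 := by
  have hnonneg (x : X) (y : Y) : 0 ≤ γ x y + w x y ∧ 0 ≤ γ' x y + -w x y := by
    have := hγ.1.1 x y
    have := hγ'.1.1 x y
    rcases Set.mem_uIcc.1 (hw x y) with ⟨h₁, h₂⟩ | ⟨h₁, h₂⟩ <;> constructor <;> linarith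
  have hcoup := hγ.1.add (fun x y => (hnonneg x y).1) hflow
  have hcoup' := hγ'.1.add (w := -w) (fun x y => (hnonneg x y).2) (by rw [map_neg, hflow, neg_zero])
  have hcost : transportCost c w = 0 := by
    have h₁ := hγ.2 _ hcoup
    have h₂ := hγ'.2 _ hcoup'
    rw [transportCost_add] at h₁ h₂
    rw [transportCost_neg] at h₂
    linarith
  have hopt : IsOptimalCoupling c (γ' + -w) p' q' := ⟨hcoup', fun η hη => by
    rw [transportCost_add, transportCost_neg, hcost, neg_zero, add_zero]
    exact hγ'.2 η hη⟩
  have hdist : tv2 (γ' + -w) γ = tv2 γ' γ - (∑ x, ∑ y, |w x y|) / 2 := by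
    simp only [tv2, Pi.add_apply, Pi.neg_apply, ← sub_eq_add_neg, sub_right_comm _ (w _ _),
      abs_sub_eq_of_mem_uIcc (hw _ _), sum_sub_distrib]
    ring
  have hsum : ∑ x, ∑ y, |w x y| = 0 :=
    le_antisymm (by linarith [hmin _ hopt]) (by positivity)
  ext x y
  have hrow := (sum_eq_zero_iff_of_nonneg fun x _ => sum_nonneg fun y _ => abs_nonneg (w x y)).1
    hsum x (mem_univ x)
  exact abs_eq_zero.1 ((sum_eq_zero_iff_of_nonneg fun y _ => abs_nonneg (w x y)).1 hrow y
    (mem_univ y))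

theorem not_transGen_signStep_self (hγ : IsOptimalCoupling c γ p q)
    (hγ' : IsOptimalCoupling c γ' p' q')
    (hmin : ∀ η, IsOptimalCoupling c η p' q' → tv2 γ' γ ≤ tv2 η γ) (z : X ⊕ Y) :
    ¬ TransGen (SignStep (γ' - γ)) z z := by
  classical
  intro hz
  obtain ⟨v, ⟨C, hC, hv⟩, hpos, hflow⟩ := exists_conformal_of_transGen hz
  have hzero : C⁻¹ • v = 0 := by
    refine eq_zero_of_forall_tv2_le hγ hγ' hmin (fun x y => ?_)
      (by rw [map_smul, hflow, sub_self, smul_zero])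
    have := Set.mem_image_of_mem (C⁻¹ * ·) (hv x y)
    rwa [Set.image_const_mul_uIcc, mul_zero, inv_mul_cancel_left₀ hC.ne'] at this
  rw [smul_eq_zero, or_iff_right (inv_ne_zero hC.ne')] at hzero
  simp [hzero] at hpos

end Coupling

section Bound

variable {X Y : Type*} [Fintype X] [Fintype Y]

theorem sum_abs_le_of_potential {δ : X → Y → ℝ} {f : X → ℝ} {g : Y → ℝ}
    (hpos : ∀ x y, 0 < δ x y → f x + 1 ≤ g y) (hneg : ∀ x y, δ x y < 0 → g y + 1 ≤ f x) :
    ∑ x, ∑ y, |δ x y| ≤ ∑ y, g y * ∑ x, δ x y - ∑ x, f x * ∑ y, δ x y := by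
  calc ∑ x, ∑ y, |δ x y| ≤ ∑ x, ∑ y, δ x y * (g y - f x) := by
        refine sum_le_sum fun x _ => sum_le_sum fun y _ => ?_
        rcases lt_trichotomy (δ x y) 0 with h | h | h
        · rw [abs_of_neg h]
          nlinarith [hneg x y h]
        · simp [h]
        · rw [abs_of_pos h]
          nlinarith [hpos x y h]
    _ = ∑ y, g y * ∑ x, δ x y - ∑ x, f x * ∑ y, δ x y := by
        simp only [mul_sub, sum_sub_distrib, mul_sum]
        rw [sum_comm]
        simp only [mul_comm]

theorem sum_abs_le_of_acyclic {δ : X → Y → ℝ} (hacyc : ∀ z, ¬ TransGen (SignStep δ) z z)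
    (htot : ∑ x, ∑ y, δ x y = 0) :
    ∑ x, ∑ y, |δ x y| ≤
      (min (Fintype.card X - 1) (Fintype.card Y) : ℕ) * ∑ x, |∑ y, δ x y| +
        (min (Fintype.card X) (Fintype.card Y - 1) : ℕ) * ∑ y, |∑ x, δ x y| := by
  obtain ⟨f, g, hpos, hneg, ⟨a, hf⟩, ⟨b, hg⟩⟩ := exists_potential hacyc fun _ _ h => h
  have hX := abs_sum_mul_le_of_sum_eq_zero (f := fun x => (f x : ℝ)) htot
    (a := a) (b := a + 2 * (min (Fintype.card X - 1) (Fintype.card Y) : ℕ))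
    fun x => ⟨by exact_mod_cast (hf x).1, by exact_mod_cast (hf x).2⟩
  have hY := abs_sum_mul_le_of_sum_eq_zero (f := fun y => (g y : ℝ)) (r := fun y => ∑ x, δ x y)
    (by rwa [sum_comm]) (a := b) (b := b + 2 * (min (Fintype.card X) (Fintype.card Y - 1) : ℕ))
    fun y => ⟨by exact_mod_cast (hg y).1, by exact_mod_cast (hg y).2⟩
  have hparts := sum_abs_le_of_potential (f := fun x => (f x : ℝ)) (g := fun y => (g y : ℝ))
    (fun x y h => by exact_mod_cast hpos x y h) (fun x y h => by exact_mod_cast hneg x y h)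
  linarith [le_abs_self (∑ y, (g y : ℝ) * ∑ x, δ x y), neg_abs_le (∑ x, (f x : ℝ) * ∑ y, δ x y)]

theorem tv2_le_of_acyclic {γ γ' : X → Y → ℝ} {p p' : X → ℝ} {q q' : Y → ℝ}
    (hγ : IsCoupling γ p q) (hγ' : IsCoupling γ' p' q') (hmass : ∑ x, p' x = ∑ x, p x)
    (hacyc : ∀ z, ¬ TransGen (SignStep (γ' - γ)) z z) :
    tv2 γ' γ ≤ (min (Fintype.card X - 1) (Fintype.card Y) : ℕ) * tv p' p +
      (min (Fintype.card X) (Fintype.card Y - 1) : ℕ) * tv q' q := by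
  have hrow (x : X) : ∑ y, (γ' x y - γ x y) = p' x - p x := by
    simp [sum_sub_distrib, hγ'.2.1 x, hγ.2.1 x]
  have hcol (y : Y) : ∑ x, (γ' x y - γ x y) = q' y - q y := by
    simp [sum_sub_distrib, hγ'.2.2 y, hγ.2.2 y]
  have htot : ∑ x, ∑ y, (γ' - γ) x y = 0 := by
    simp only [Pi.sub_apply, hrow, sum_sub_distrib, hmass, sub_self]
  have key := sum_abs_le_of_acyclic hacyc htot
  simp only [Pi.sub_apply, hrow, hcol] at key
  unfold tv2 tv
  linarith

end Bound

theorem lipschitz_solution_set_general {X Y : Type*} [Fintype X] [Fintype Y]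
    (c : X → Y → ℝ) (p p' : X → ℝ) (q q' : Y → ℝ)
    (hp : IsProbVec p) (hp' : IsProbVec p') (hq' : IsProbVec q')
    (γ : X → Y → ℝ) (hγ : IsOptimalCoupling c γ p q) :
    ∃ γ' : X → Y → ℝ, IsOptimalCoupling c γ' p' q' ∧
      tv2 γ' γ ≤
        ((min (min (Fintype.card X) (Fintype.card Y))
            (max (Fintype.card X) (Fintype.card Y) - 1) : ℕ) : ℝ) *
          (tv p' p + tv q' q) := by
  obtain ⟨γ', hγ', hmin⟩ := exists_isOptimalCoupling_forall_le c ⟨_, hp'.isCoupling_mul hq'⟩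
    (f := fun η => tv2 η γ) (by unfold tv2; fun_prop)
  refine ⟨γ', hγ', ?_⟩
  have hbound := tv2_le_of_acyclic hγ.1 hγ'.1 (by rw [hp.2, hp'.2])
    (not_transGen_signStep_self hγ hγ' hmin)
  have hK₁ : min (Fintype.card X - 1) (Fintype.card Y) ≤
      min (min (Fintype.card X) (Fintype.card Y)) (max (Fintype.card X) (Fintype.card Y) - 1) := by
    omega
  have hK₂ : min (Fintype.card X) (Fintype.card Y - 1) ≤
      min (min (Fintype.card X) (Fintype.card Y)) (max (Fintype.card X) (Fintype.card Y) - 1) := by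
    omega
  rw [mul_add]
  refine hbound.trans (add_le_add ?_ ?_)
  · exact mul_le_mul_of_nonneg_right (by exact_mod_cast hK₁) (tv_nonneg _ _)
  · exact mul_le_mul_of_nonneg_right (by exact_mod_cast hK₂) (tv_nonneg _ _)

/-- Lipschitz continuity of the solution set of finite optimal
transport in the marginals. -/
theorem lipschitz_solution_set {X Y : Type*} [Fintype X] [Fintype Y]
    [Nonempty X] [Nonempty Y]
    (c : X → Y → ℝ) (p p' : X → ℝ) (q q' : Y → ℝ)
    (hp : IsProbVec p) (hp' : IsProbVec p') (hq : IsProbVec q) (hq' : IsProbVec q')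
    (γ : X → Y → ℝ) (hγ : IsOptimalCoupling c γ p q) :
    ∃ γ' : X → Y → ℝ, IsOptimalCoupling c γ' p' q' ∧
      tv2 γ' γ ≤
        ((min (min (Fintype.card X) (Fintype.card Y))
            (max (Fintype.card X) (Fintype.card Y) - 1) : ℕ) : ℝ) *
          (tv p' p + tv q' q) :=
  lipschitz_solution_set_general c p p' q q' hp hp' hq' γ hγ
end

section
/- Let Z be a finite nonempty set, c : Z × Z → ℝ a cost function, and p, q ∈ Δ(Z). Let S ⊆ Z × Z contain the diagonal {(z,z) : z ∈ Z}. If S is strictly c-cyclically monotone, then EVERY c-optimal coupling γ of p and q satisfies 1 − Σ_{(z,z')∈S} γ(z,z') ≤ (|Z| − 1)·‖q − p‖. -/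
/-! If an optimal coupling `γ` put mass on an edge `(a, b) ∉ S` that lies on a cycle of its
support, moving a little mass from that cycle onto the diagonal (which lies in `S`) would strictly
lower the cost, by strict cyclical monotonicity. So every support edge outside `S` goes strictly
up in the reachability preorder of the support graph, and the number `F z` of points strictly
below `z` is a potential with values in `[0, |Z| - 1]` that never decreases along the support and
rises by at least one along its edges outside `S`. Hence the mass outside `S` is at most
`∑ γ a b (F b - F a) = ∑ F z (q z - p z) ≤ (|Z| - 1) ‖q - p‖`. -/

open Finset

/-- The set `S ⊆ Z × Z` is `c`-cyclically monotone. -/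
def CyclMono {Z : Type*} (c : Z → Z → ℝ) (S : Set (Z × Z)) : Prop :=
  ∀ J : ℕ, ∀ z z' : Fin (J + 2) → Z, (∀ j, (z j, z' j) ∈ S) →
    ∑ j, c (z j) (z' j) ≤ ∑ j, c (z j) (z' (j + 1))

/-- The set `S ⊆ Z × Z` is strictly `c`-cyclically monotone: it is
`c`-cyclically monotone, and the cyclic inequality is strict whenever
`(z_j, z'_{j+1}) ∉ S` for some `j`. -/
def StrictCyclMono {Z : Type*} (c : Z → Z → ℝ) (S : Set (Z × Z)) : Prop :=
  CyclMono c S ∧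
    ∀ J : ℕ, ∀ z z' : Fin (J + 2) → Z, (∀ j, (z j, z' j) ∈ S) →
      (∃ j, (z j, z' (j + 1)) ∉ S) →
      ∑ j, c (z j) (z' j) < ∑ j, c (z j) (z' (j + 1))

namespace Relation

variable {α : Type*} {r : α → α → Prop} {a b : α}

theorem ReflTransGen.exists_path (h : ReflTransGen r a b) :
    ∃ n, ∃ f : Fin (n + 1) → α,
      f 0 = a ∧ f (Fin.last n) = b ∧ ∀ i : Fin n, r (f i.castSucc) (f i.succ) := by
  induction h using ReflTransGen.head_induction_on with
  | refl => exact ⟨0, fun _ => b, rfl, rfl, Fin.elim0⟩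
  | head hac _ ih =>
    obtain ⟨n, f, hf0, hflast, hf⟩ := ih
    refine ⟨n + 1, Fin.cons _ f, rfl, by simpa using hflast, Fin.cases ?_ fun i => ?_⟩
    · simpa [hf0] using hac
    · simpa using hf i

theorem exists_cycle_of_rel_of_reflTransGen (hab : r a b) (hba : ReflTransGen r b a) :
    ∃ n, ∃ f : Fin (n + 1) → α, f (Fin.last n) = a ∧ f 0 = b ∧ ∀ j, r (f j) (f (j + 1)) := by
  obtain ⟨n, f, hf0, hflast, hf⟩ := hba.exists_path
  refine ⟨n, f, hflast, hf0, fun j => ?_⟩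
  induction j using Fin.lastCases with
  | last => simpa [Fin.last_add_one, hflast, hf0] using hab
  | cast i => simpa [Fin.coeSucc_eq_succ] using hf i

end Relation

section StrictLowerCount

variable {α : Type*} [Fintype α] (R : α → α → Prop) [DecidableRel R]

def strictLowerCount (z : α) : ℕ :=
  #{x | R x z ∧ ¬R z x}

variable {R}

theorem filter_strictLower_subset [IsTrans α R] {x y : α} (hxy : R x y) :
    ({w | R w x ∧ ¬R x w} : Finset α) ⊆ ({w | R w y ∧ ¬R y w} : Finset α) := by
  intro w hw
  simp only [mem_filter, mem_univ, true_and] at hw ⊢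
  exact ⟨_root_.trans hw.1 hxy, fun hyw => hw.2 (_root_.trans hxy hyw)⟩

theorem strictLowerCount_mono [IsTrans α R] {x y : α} (hxy : R x y) :
    strictLowerCount R x ≤ strictLowerCount R y :=
  card_le_card (filter_strictLower_subset hxy)

theorem strictLowerCount_lt [IsPreorder α R] {x y : α} (hxy : R x y) (hyx : ¬R y x) :
    strictLowerCount R x < strictLowerCount R y :=
  card_lt_card <| (ssubset_iff_of_subset (filter_strictLower_subset hxy)).mpr
    ⟨x, by simpa using ⟨hxy, hyx⟩, by simp [refl x]⟩

theorem strictLowerCount_lt_card [Std.Refl R] (z : α) : strictLowerCount R z < Fintype.card α :=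
  card_lt_univ_of_notMem (x := z) (by simp [refl z])

end StrictLowerCount

section CyclicReroute

variable {X Y : Type*} [DecidableEq X] [DecidableEq Y] {n : ℕ} [NeZero n]
  (x : Fin n → X) (y : Fin n → Y)

/-- The signed measure that moves, for every `j`, one unit of mass from `(x j, y (j + 1))`
to `(x j, y j)`. -/
def cyclicReroute (a : X) (b : Y) : ℝ :=
  ∑ j, ((if a = x j ∧ b = y j then 1 else 0) - if a = x j ∧ b = y (j + 1) then 1 else 0)

theorem neg_le_cyclicReroute (a : X) (b : Y) : -(n : ℝ) ≤ cyclicReroute x y a b := by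
  calc -(n : ℝ) = ∑ _j : Fin n, (-1 : ℝ) := by simp
    _ ≤ cyclicReroute x y a b := sum_le_sum fun j _ => by split_ifs <;> norm_num

theorem cyclicReroute_nonneg {a : X} {b : Y} (h : ∀ j, ¬(a = x j ∧ b = y (j + 1))) :
    0 ≤ cyclicReroute x y a b :=
  sum_nonneg fun j _ => by rw [if_neg (h j)]; split_ifs <;> norm_num

theorem sum_cyclicReroute_right [Fintype Y] (a : X) : ∑ b, cyclicReroute x y a b = 0 := by
  simp only [cyclicReroute]
  rw [sum_comm]
  simp [ite_and]

theorem sum_cyclicReroute_left [Fintype X] (b : Y) : ∑ a, cyclicReroute x y a b = 0 := by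
  simp only [cyclicReroute]
  rw [sum_comm]
  simp only [sum_sub_distrib, ite_and, sum_ite_eq', mem_univ, if_true, sub_eq_zero]
  exact (Fintype.sum_equiv (Equiv.addRight 1) _ _ fun _ => rfl).symm

variable [Fintype X] [Fintype Y]

theorem sum_mul_cyclicReroute (c : X → Y → ℝ) :
    ∑ a, ∑ b, c a b * cyclicReroute x y a b = ∑ j, c (x j) (y j) - ∑ j, c (x j) (y (j + 1)) := by
  have hsingle (g : Fin n → Y) :
      ∑ a, ∑ b, ∑ j, (if a = x j ∧ b = g j then c a b else 0) = ∑ j, c (x j) (g j) := by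
    simp_rw [sum_comm (s := (univ : Finset Y)) (t := (univ : Finset (Fin n)))]
    rw [sum_comm]
    simp [ite_and]
  simp only [cyclicReroute, mul_sum, mul_sub, mul_ite, mul_one, mul_zero, sum_sub_distrib,
    hsingle]

variable {x y}

theorem IsCoupling.exists_add_cyclicReroute {γ : X → Y → ℝ} {p : X → ℝ} {q : Y → ℝ}
    (hγ : IsCoupling γ p q) (hpos : ∀ j, 0 < γ (x j) (y (j + 1))) :
    ∃ ε > 0, IsCoupling (fun a b => γ a b + ε * cyclicReroute x y a b) p q := by
  obtain ⟨hnonneg, hrow, hcol⟩ := hγ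
  obtain ⟨j₀, hj₀⟩ := Finite.exists_min fun j => γ (x j) (y (j + 1))
  have hn : (0 : ℝ) < n := Nat.cast_pos.mpr (NeZero.pos n)
  refine ⟨γ (x j₀) (y (j₀ + 1)) / n, div_pos (hpos j₀) hn, fun a b => ?_, fun a => ?_,
    fun b => ?_⟩
  · by_cases hab : ∃ j, a = x j ∧ b = y (j + 1)
    · obtain ⟨j, rfl, rfl⟩ := hab
      have := mul_le_mul_of_nonneg_left (neg_le_cyclicReroute x y (x j) (y (j + 1)))
        (div_pos (hpos j₀) hn).le
      rw [mul_neg, div_mul_cancel₀ _ hn.ne'] at this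
      linarith [hj₀ j]
    · push Not at hab
      have := cyclicReroute_nonneg x y fun j h => hab j h.1 h.2
      have := mul_nonneg (div_pos (hpos j₀) hn).le this
      linarith [hnonneg a b]
  · rw [sum_add_distrib, ← mul_sum, sum_cyclicReroute_right, hrow, mul_zero, add_zero]
  · rw [sum_add_distrib, ← mul_sum, sum_cyclicReroute_left, hcol, mul_zero, add_zero]

end CyclicReroute

/-- Cyclic monotonicity of the support of an optimal coupling. -/
theorem IsOptimalCoupling.sum_cost_shift_le {X Y : Type*} [Fintype X] [Fintype Y] {n : ℕ}
    [NeZero n] {x : Fin n → X} {y : Fin n → Y} {c : X → Y → ℝ} {γ : X → Y → ℝ} {p : X → ℝ}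
    {q : Y → ℝ} (hγ : IsOptimalCoupling c γ p q) (hpos : ∀ j, 0 < γ (x j) (y (j + 1))) :
    ∑ j, c (x j) (y (j + 1)) ≤ ∑ j, c (x j) (y j) := by
  classical
  obtain ⟨ε, hε, hcoup⟩ := hγ.1.exists_add_cyclicReroute hpos
  have hcost : transportCost c (fun a b => γ a b + ε * cyclicReroute x y a b) =
      transportCost c γ + ε * (∑ j, c (x j) (y j) - ∑ j, c (x j) (y (j + 1))) := by
    simp only [transportCost, mul_add, sum_add_distrib, mul_left_comm _ ε, ← mul_sum,
      sum_mul_cyclicReroute]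
  have := hγ.2 _ hcoup
  rw [hcost, le_add_iff_nonneg_right, mul_nonneg_iff_of_pos_left hε] at this
  linarith

section Potential

variable {Z : Type*} [Fintype Z]

theorem sum_max_sub_zero_eq_tv {p q : Z → ℝ} (hpq : ∑ z, p z = ∑ z, q z) :
    ∑ z, max (q z - p z) 0 = tv q p := by
  have hmax (t : ℝ) : max t 0 = (t + |t|) / 2 := by
    rcases le_total 0 t with h | h
    · rw [max_eq_left h, abs_of_nonneg h]; ring
    · rw [max_eq_right h, abs_of_nonpos h]; ring
  simp only [hmax, ← sum_div, sum_add_distrib, sum_sub_distrib, hpq, sub_self, zero_add, tv]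

theorem sum_mul_sub_le_mul_tv {p q F : Z → ℝ} {M : ℝ} (hpq : ∑ z, p z = ∑ z, q z)
    (hF₀ : ∀ z, 0 ≤ F z) (hFM : ∀ z, F z ≤ M) :
    ∑ z, F z * (q z - p z) ≤ M * tv q p := by
  rw [← sum_max_sub_zero_eq_tv hpq, mul_sum]
  refine sum_le_sum fun z _ => ?_
  rcases le_total 0 (q z - p z) with h | h
  · rw [max_eq_left h]
    exact mul_le_mul_of_nonneg_right (hFM z) h
  · rw [max_eq_right h, mul_zero]
    exact mul_nonpos_of_nonneg_of_nonpos (hF₀ z) h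

theorem IsCoupling.sum_sub_mul_eq {γ : Z → Z → ℝ} {p q : Z → ℝ} (hγ : IsCoupling γ p q)
    (F : Z → ℝ) : ∑ a, ∑ b, (F b - F a) * γ a b = ∑ z, F z * (q z - p z) := by
  simp only [sub_mul, sum_sub_distrib, mul_sub]
  rw [sum_comm]
  simp only [← mul_sum, hγ.2.1, hγ.2.2]

theorem IsCoupling.sum_ite_notMem_le {γ : Z → Z → ℝ} {p q : Z → ℝ} (hγ : IsCoupling γ p q)
    (S : Set (Z × Z)) [DecidablePred (· ∈ S)] (F : Z → ℝ)
    (hmono : ∀ a b, 0 < γ a b → F a ≤ F b)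
    (hjump : ∀ a b, 0 < γ a b → (a, b) ∉ S → F a + 1 ≤ F b) :
    ∑ a, ∑ b, (if (a, b) ∈ S then 0 else γ a b) ≤ ∑ z, F z * (q z - p z) := by
  rw [← hγ.sum_sub_mul_eq]
  refine sum_le_sum fun a _ => sum_le_sum fun b _ => ?_
  rcases (hγ.1 a b).eq_or_lt with h | h
  · simp [← h]
  split_ifs with hS
  · exact mul_nonneg (sub_nonneg.mpr (hmono a b h)) h.le
  · nlinarith [hjump a b h hS]

end Potential

theorem IsOptimalCoupling.not_reflTransGen_of_notMem {Z : Type*} [Fintype Z]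
    {c : Z → Z → ℝ} {γ : Z → Z → ℝ} {p q : Z → ℝ} (hγ : IsOptimalCoupling c γ p q)
    {S : Set (Z × Z)} (hdiag : ∀ z, (z, z) ∈ S) (hS : StrictCyclMono c S) {a b : Z}
    (hab : 0 < γ a b) (habS : (a, b) ∉ S) :
    ¬Relation.ReflTransGen (fun x y => 0 < γ x y) b a := by
  intro hba
  obtain ⟨_ | J, f, hfa, hfb, hf⟩ :=
    Relation.exists_cycle_of_rel_of_reflTransGen (r := fun x y => 0 < γ x y) hab hba
  · exact habS (by simpa [← hfa, ← hfb] using hdiag a)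
  have hstrict := hS.2 J f f (fun j => hdiag (f j)) ⟨Fin.last _, by simpa [hfa, hfb] using habS⟩
  linarith [hγ.sum_cost_shift_le hf]

theorem strict_mass_moved_bound_general {Z : Type*} [Fintype Z]
    (c : Z → Z → ℝ) (p q : Z → ℝ) (hp : IsProbVec p) (hq : IsProbVec q)
    (S : Set (Z × Z)) [DecidablePred (· ∈ S)]
    (hdiag : ∀ z : Z, (z, z) ∈ S)
    (hS : StrictCyclMono c S)
    (γ : Z → Z → ℝ) (hγ : IsOptimalCoupling c γ p q) :
    1 - ∑ z, ∑ z', (if (z, z') ∈ S then γ z z' else 0) ≤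
      ((Fintype.card Z : ℝ) - 1) * tv q p := by
  classical
  set R := Relation.ReflTransGen (fun a b => 0 < γ a b)
  set F : Z → ℝ := fun z => strictLowerCount R z
  have hmono (a b : Z) (h : 0 < γ a b) : F a ≤ F b := by
    simp only [F]
    exact_mod_cast strictLowerCount_mono (.single h : R a b)
  have hjump (a b : Z) (h : 0 < γ a b) (habS : (a, b) ∉ S) : F a + 1 ≤ F b := by
    simp only [F]
    exact_mod_cast Nat.add_one_le_iff.mpr <|
      strictLowerCount_lt (.single h : R a b) (hγ.not_reflTransGen_of_notMem hdiag hS h habS)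
  have hF_le (z : Z) : F z ≤ Fintype.card Z - 1 := by
    simp only [F, le_sub_iff_add_le]
    exact_mod_cast strictLowerCount_lt_card z
  calc 1 - ∑ z, ∑ z', (if (z, z') ∈ S then γ z z' else 0)
      = ∑ z, ∑ z', (if (z, z') ∈ S then 0 else γ z z') := by
        rw [← hp.2, ← sum_congr rfl fun z _ => hγ.1.2.1 z, ← sum_sub_distrib]
        refine sum_congr rfl fun z _ => ?_
        rw [← sum_sub_distrib]
        exact sum_congr rfl fun z' _ => by split_ifs <;> ring
    _ ≤ ∑ z, F z * (q z - p z) := hγ.1.sum_ite_notMem_le S F hmono hjump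
    _ ≤ (Fintype.card Z - 1) * tv q p :=
        sum_mul_sub_le_mul_tv (by rw [hp.2, hq.2]) (fun z => Nat.cast_nonneg _) hF_le

/-- Bound on mass moved under strict cyclical monotonicity.
If `S` contains the diagonal and is strictly `c`-cyclically monotone, then
EVERY `c`-optimal coupling `γ` of `p` and `q` places mass at most
`(|Z| − 1)·‖q − p‖` outside `S`. -/
theorem strict_mass_moved_bound {Z : Type*} [Fintype Z] [Nonempty Z]
    (c : Z → Z → ℝ) (p q : Z → ℝ) (hp : IsProbVec p) (hq : IsProbVec q)
    (S : Set (Z × Z)) [DecidablePred (· ∈ S)]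
    (hdiag : ∀ z : Z, (z, z) ∈ S)
    (hS : StrictCyclMono c S)
    (γ : Z → Z → ℝ) (hγ : IsOptimalCoupling c γ p q) :
    1 - ∑ z, ∑ z', (if (z, z') ∈ S then γ z z' else 0) ≤
      ((Fintype.card Z : ℝ) - 1) * tv q p :=
  strict_mass_moved_bound_general c p q hp hq S hdiag hS γ hγ
end
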